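/- Soundness of minimal logic with respect to epistemic realizability: if Γ ⊢ t : A is derivable in the simply typed lambda calculus, then ⟨A⟩(t^Γ) reduces in zero or more steps to ⋆, where t^Γ is t with each free variable x of type B in Γ replaced by the generator ✠B. -/

import Mathlib

/-! The metacalculus λ→m for minimal logic: untyped λ-calculus extended with
a success constant ⋆, a guard construct (M; N), and generators ✠𝐚 / verifiers ⟨𝐚⟩
for atomic types. Terms use de Bruijn indices. -/

/-- Simple types: atomic types and arrows. -/
inductive Ty : Type
  | atom : ℕ → Ty
  | arrow : Ty → Ty → Ty

/-- Metaterms of the metacalculus λ→m (de Bruijn indices). -/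
inductive Tm : Type
  | var : ℕ → Tm
  | lam : Tm → Tm
  | app : Tm → Tm → Tm
  | star : Tm
  | guard : Tm → Tm → Tm
  | gen : ℕ → Tm
  | verif : ℕ → Tm → Tm

namespace Tm

/-- Shift de Bruijn indices ≥ c by d. -/
def shift (d c : ℕ) : Tm → Tm
  | var n => if n < c then var n else var (n + d)
  | lam M => lam (shift d (c+1) M)
  | app M N => app (shift d c M) (shift d c N)
  | star => star
  | guard M N => guard (shift d c M) (shift d c N)
  | gen a => gen a
  | verif a M => verif a (shift d c M)

/-- Capture-avoiding substitution of the variable k by N. -/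
def subst (k : ℕ) (N : Tm) : Tm → Tm
  | var n => if n = k then N else if k < n then var (n - 1) else var n
  | lam M => lam (subst (k+1) (shift 1 0 N) M)
  | app M P => app (subst k N M) (subst k N P)
  | star => star
  | guard M P => guard (subst k N M) (subst k N P)
  | gen a => gen a
  | verif a M => verif a (subst k N M)

/-- Pure metaterms: only variables, abstractions and applications. -/
def Pure : Tm → Prop
  | var _ => True
  | lam M => Pure M
  | app M N => Pure M ∧ Pure N
  | _ => False

end Tm

/-- One-step reduction of λ→m, closed under arbitrary contexts. -/
inductive Step : Tm → Tm → Prop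
  | beta (M N : Tm) : Step (.app (.lam M) N) (Tm.subst 0 N M)
  | guardStar (M : Tm) : Step (.guard .star M) M
  | verifGen (a : ℕ) : Step (.verif a (.gen a)) .star
  | lam {M M'} : Step M M' → Step (.lam M) (.lam M')
  | appL {M M'} (N) : Step M M' → Step (.app M N) (.app M' N)
  | appR {N N'} (M) : Step N N' → Step (.app M N) (.app M N')
  | guardL {M M'} (N) : Step M M' → Step (.guard M N) (.guard M' N)
  | guardR {N N'} (M) : Step N N' → Step (.guard M N) (.guard M N')
  | verif {M M'} (a) : Step M M' → Step (.verif a M) (.verif a M')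

/-- Weak head reduction of λ→m: the rules closed under weak head contexts only. -/
inductive WStep : Tm → Tm → Prop
  | beta (M N : Tm) : WStep (.app (.lam M) N) (Tm.subst 0 N M)
  | guardStar (M : Tm) : WStep (.guard .star M) M
  | verifGen (a : ℕ) : WStep (.verif a (.gen a)) .star
  | appL {M M'} (N) : WStep M M' → WStep (.app M N) (.app M' N)
  | guardL {M M'} (N) : WStep M M' → WStep (.guard M N) (.guard M' N)
  | verif {M M'} (a) : WStep M M' → WStep (.verif a M) (.verif a M')

/-- β-reduction alone, closed under arbitrary contexts. -/
inductive BStep : Tm → Tm → Prop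
  | beta (M N : Tm) : BStep (.app (.lam M) N) (Tm.subst 0 N M)
  | lam {M M'} : BStep M M' → BStep (.lam M) (.lam M')
  | appL {M M'} (N) : BStep M M' → BStep (.app M N) (.app M' N)
  | appR {N N'} (M) : BStep N N' → BStep (.app M N) (.app M N')
  | guardL {M M'} (N) : BStep M M' → BStep (.guard M N) (.guard M' N)
  | guardR {N N'} (M) : BStep N N' → BStep (.guard M N) (.guard M N')
  | verif {M M'} (a) : BStep M M' → BStep (.verif a M) (.verif a M')

mutual
/-- The generator ✠A for an arbitrary simple type A. -/
def genT : Ty → Tm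
  | .atom a => .gen a
  | .arrow A B => .lam (.guard (verifT A (.var 0)) (genT B))
/-- The verifier ⟨A⟩M for an arbitrary simple type A applied to M. -/
def verifT : Ty → Tm → Tm
  | .atom a, M => .verif a M
  | .arrow A B, M => verifT B (.app M (genT A))
end



/-- Parallel (simultaneous) substitution of all free variables. -/
def liftSub (σ : ℕ → Tm) : ℕ → Tm :=
  fun n => match n with
  | 0 => .var 0
  | n+1 => Tm.shift 1 0 (σ n)

def substPar (σ : ℕ → Tm) : Tm → Tm
  | .var n => σ n
  | .lam M => .lam (substPar (liftSub σ) M)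
  | .app M N => .app (substPar σ M) (substPar σ N)
  | .star => .star
  | .guard M N => .guard (substPar σ M) (substPar σ N)
  | .gen a => .gen a
  | .verif a M => .verif a (substPar σ M)

/-- Typing judgments of the simply typed λ-calculus (de Bruijn). -/
inductive Typing : List Ty → Tm → Ty → Prop
  | var {Γ : List Ty} {n : ℕ} {A : Ty} :
      Γ[n]? = some A → Typing Γ (.var n) A
  | lam {Γ : List Ty} {M : Tm} {A B : Ty} :
      Typing (A :: Γ) M B → Typing Γ (.lam M) (.arrow A B)
  | app {Γ : List Ty} {M N : Tm} {A B : Ty} :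
      Typing Γ M (.arrow A B) → Typing Γ N A → Typing Γ (.app M N) B

/-- The generative substitution for Γ: each free variable x:B ∈ Γ is replaced
by the generator ✠B. -/
def genSub (Γ : List Ty) : ℕ → Tm :=
  fun n => match Γ[n]? with
  | some A => genT A
  | none => .var n

/-!
Soundness is proved with a logical relation. A metaterm realizes an atomic type `𝐚` when
`⟨𝐚⟩M ↠ ⋆`, and realizes `A ⇒ B` when it sends realizers of `A` to realizers of `B` by
application. By induction on `A`, the generator `✠A` realizes `A` and `⟨A⟩M ↠ ⋆` for every
realizer `M` of `A`. By induction on typing derivations, substituting realizers for the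
variables of a well-typed term yields a realizer of its type; since `✠B` realizes `B`, this
applies to the generative substitution.
-/

namespace Tm

theorem shift_shift_of_le (d e : ℕ) {i c : ℕ} (hic : i ≤ c) (M : Tm) :
    shift d i (shift e c M) = shift e (c + d) (shift d i M) := by
  induction M generalizing i c with
  | var n =>
    by_cases hn : n < c <;> by_cases hi : n < i <;> simp only [shift, hn, hi, if_true, if_false]
    all_goals split_ifs <;> simp only [var.injEq] <;> omega
  | lam M ih => simp only [shift, ih (Nat.succ_le_succ hic), Nat.succ_add]
  | _ => simp_all [shift]

theorem subst_shift_self (k : ℕ) (N M : Tm) : subst k N (shift 1 k M) = M := by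
  induction M generalizing k N with
  | var n =>
    by_cases hn : n < k
    · simp [shift, subst, hn, Nat.ne_of_lt hn, Nat.not_lt_of_gt hn]
    · simp [shift, subst, hn, show n + 1 ≠ k by omega, show k < n + 1 by omega]
  | _ => simp_all [shift, subst]

theorem subst_shift_shift {c k : ℕ} (hck : c ≤ k) (d : ℕ) (N M : Tm) :
    subst (k + d) (shift d c N) (shift d c M) = shift d c (subst k N M) := by
  induction M generalizing c k N with
  | var n =>
    by_cases hn : n < c <;> simp only [shift, subst, hn, if_true, if_false]
    all_goals split_ifs
    all_goals first | rfl | omega | simp only [shift]; split_ifs <;> simp only [var.injEq] <;> omega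
  | lam M ih =>
    simp only [shift, subst]
    rw [shift_shift_of_le 1 d (Nat.zero_le c), Nat.add_right_comm, ih (Nat.succ_le_succ hck)]
  | _ => simp_all [shift, subst]

end Tm

def scons (N : Tm) (σ : ℕ → Tm) : ℕ → Tm
  | 0 => N
  | n + 1 => σ n

theorem subst_substPar {σ τ : ℕ → Tm} {k : ℕ} {N : Tm}
    (hστ : ∀ n, Tm.subst k N (σ n) = τ n) (M : Tm) :
    Tm.subst k N (substPar σ M) = substPar τ M := by
  induction M generalizing σ τ k N with
  | var n => exact hστ n
  | lam M ih =>
    refine congrArg Tm.lam (ih fun n => ?_)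
    cases n with
    | zero => simp [liftSub, Tm.subst]
    | succ n => simpa [liftSub, ← hστ n] using Tm.subst_shift_shift (Nat.zero_le k) 1 N (σ n)
  | _ => simp_all [substPar, Tm.subst]

theorem subst_zero_substPar_liftSub (N : Tm) (σ : ℕ → Tm) (M : Tm) :
    Tm.subst 0 N (substPar (liftSub σ) M) = substPar (scons N σ) M :=
  subst_substPar (fun n => by cases n <;> simp [liftSub, scons, Tm.subst, Tm.subst_shift_self]) M

mutual

theorem subst_genT : ∀ (A : Ty) (k : ℕ) (N : Tm), Tm.subst k N (genT A) = genT A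
  | .atom _, _, _ => rfl
  | .arrow A B, k, N => by simp [genT, Tm.subst, subst_verifT A, subst_genT B]

theorem subst_verifT : ∀ (A : Ty) (k : ℕ) (N M : Tm),
    Tm.subst k N (verifT A M) = verifT A (Tm.subst k N M)
  | .atom _, _, _, _ => rfl
  | .arrow A B, k, N, M => by simp [verifT, Tm.subst, subst_verifT B, subst_genT A]

end

open Relation

theorem reduces_guard_left (N : Tm) {M M' : Tm} (h : ReflTransGen Step M M') :
    ReflTransGen Step (.guard M N) (.guard M' N) :=
  h.lift (Tm.guard · N) fun _ _ => Step.guardL N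

def Realizes : Ty → Tm → Prop
  | .atom a, M => ReflTransGen Step (.verif a M) .star
  | .arrow A B, M => ∀ N, Realizes A N → Realizes B (.app M N)

theorem Realizes.of_step {A : Ty} {M M' : Tm} (h : Step M M') (hM' : Realizes A M') :
    Realizes A M := by
  induction A generalizing M M' with
  | atom a => exact ReflTransGen.head (Step.verif a h) hM'
  | arrow A B _ ihB => exact fun N hN => ihB (Step.appL N h) (hM' N hN)

theorem Realizes.of_reduces {A : Ty} {M M' : Tm} (h : ReflTransGen Step M M')
    (hM' : Realizes A M') : Realizes A M := by
  induction h using ReflTransGen.head_induction_on with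
  | refl => exact hM'
  | head hstep _ ih => exact ih.of_step hstep

theorem step_genT_arrow_app (A B : Ty) (N : Tm) :
    Step (.app (genT (.arrow A B)) N) (.guard (verifT A N) (genT B)) := by
  have h := Step.beta (.guard (verifT A (.var 0)) (genT B)) N
  simp only [Tm.subst, subst_verifT, subst_genT, if_true] at h
  exact h

mutual

theorem realizes_genT : ∀ A : Ty, Realizes A (genT A)
  | .atom a => ReflTransGen.single (Step.verifGen a)
  | .arrow A B => fun N hN =>
    (realizes_genT B).of_reduces <| .head (step_genT_arrow_app A B N) <|
      (reduces_guard_left _ (Realizes.verifT_reduces_star A hN)).tail (Step.guardStar _)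

theorem Realizes.verifT_reduces_star : ∀ (A : Ty) {M : Tm}, Realizes A M →
    ReflTransGen Step (verifT A M) .star
  | .atom _, _, hM => hM
  | .arrow A B, _, hM => Realizes.verifT_reduces_star B (hM _ (realizes_genT A))

end

theorem Typing.realizes_substPar {Γ : List Ty} {t : Tm} {A : Ty} (h : Typing Γ t A)
    {σ : ℕ → Tm} (hσ : ∀ n B, Γ[n]? = some B → Realizes B (σ n)) :
    Realizes A (substPar σ t) := by
  induction h generalizing σ with
  | var hget => exact hσ _ _ hget
  | lam _ ih =>
    intro N hN
    refine Realizes.of_step (Step.beta _ _) ?_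
    rw [subst_zero_substPar_liftSub]
    refine ih fun n B hget => ?_
    cases n with
    | zero => cases hget; exact hN
    | succ n => exact hσ n B hget
  | app _ _ ihM ihN => exact ihM hσ _ (ihN hσ)

theorem realizes_genSub {Γ : List Ty} {n : ℕ} {B : Ty} (h : Γ[n]? = some B) :
    Realizes B (genSub Γ n) := by
  simpa [genSub, h] using realizes_genT B

/-- Soundness: if Γ ⊢ t : A in the simply typed λ-calculus then
⟨A⟩(t^Γ) ↠ ⋆, where t^Γ substitutes generators for the variables of Γ. -/
theorem soundness {Γ : List Ty} {t : Tm} {A : Ty} (h : Typing Γ t A) :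
    Relation.ReflTransGen Step (verifT A (substPar (genSub Γ) t)) Tm.star :=
  (h.realizes_substPar fun _ _ => realizes_genSub).verifT_reduces_star A
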